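/- arXiv:2305.05721 — 2 statements merged into one kernel-verified Lean document; each statement's English description precedes it below -/
import Mathlib

section
/- The function M̃ is twice differentiable on (0,∞) and satisfies the ordinary differential equation λ(1+x) M̃′(x) + (ν/2) x² M̃″(x) − λ M̃(x) = x for every x ∈ (0,∞). -/
open MeasureTheory Set
open scoped ENNReal NNReal BigOperators

noncomputable section

/-- The function `M̃` appearing in the Mayer reformulation (with diffusion
coefficient `ν`), where `κ := 2 λ / ν`. -/
def Mtilde (ν lam : ℝ) (x : ℝ) : ℝ :=
  (2 / ν) * (1 + x) *
    ∫ v in Set.Ioc (0 : ℝ) (x / (1 + x)),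
      ((1 - v) / v) ^ (2 * lam / ν) * Real.exp ((2 * lam / ν) / v) *
        ∫ u in Set.Ioc (0 : ℝ) v,
          u ^ (2 * lam / ν - 1) * (1 - u) ^ (-(2 * lam / ν) - 2) *
            Real.exp (-(2 * lam / ν) / u)

/-!
Write `k = 2λ/ν`, `g` (`innerIntegrand`) and `G` (`innerIntegral`) for the inner integrand and
integral, `ψ(v) = ((1 - v)/v)^k e^{k/v}` (`weight`), `φ = ψ G` (`outerIntegrand`) and `F = ∫ φ`
(`outerIntegral`), so that `M̃(x) = (2/ν) (1 + x) F(y)` with `y = x/(1 + x)`. Since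
`ψ g = 1/(v (1 - v)²)` and `ψ'/ψ = -k/(v² (1 - v))`, `ψ` is an integrating factor:
`v² (1 - v) φ' + k φ = v/(1 - v)`. Differentiating in `x` gives
`M̃' = (2/ν) (F(y) + φ(y)/(1 + x))` and `M̃'' = (2/ν) (x - k φ(y))/x²`, from which the ODE is
immediate. The integrals converge at `0` because `G(v) ≤ v g(v)/k`, which bounds `φ` by
`1/(k (1 - v)²)`.
-/

theorem hasDerivAt_setIntegral_Ioc {E : Type*} [NormedAddCommGroup E] [NormedSpace ℝ E]
    [CompleteSpace E] {f : ℝ → E} {a b : ℝ} {s : Set ℝ} (hab : a < b)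
    (hf : IntegrableOn f (Ioc a b)) (hs : IsOpen s) (hfs : ContinuousOn f s) (hb : b ∈ s) :
    HasDerivAt (fun t => ∫ u in Ioc a t, f u) (f b) b := by
  have hint : IntervalIntegrable f volume a b :=
    (intervalIntegrable_iff_integrableOn_Ioc_of_le hab.le).2 hf
  refine (intervalIntegral.integral_hasDerivAt_right hint (hfs.stronglyMeasurableAtFilter hs b hb)
    (hfs.continuousAt (hs.mem_nhds hb))).congr_of_eventuallyEq ?_
  filter_upwards [eventually_gt_nhds hab] with t ht
  exact (intervalIntegral.integral_of_le ht.le).symm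

theorem integrableOn_rpow_mul_const {r : ℝ} (hr : -1 < r) (c : ℝ) {t : ℝ} (ht : 0 ≤ t) :
    IntegrableOn (fun u : ℝ => u ^ r * c) (Ioc 0 t) :=
  (intervalIntegrable_iff_integrableOn_Ioc_of_le ht).1
    ((intervalIntegral.intervalIntegrable_rpow' hr).mul_const c)

section ChangeOfVariables

variable {F φ : ℝ → ℝ} {x : ℝ}

theorem hasDerivAt_div_one_add (hx : 1 + x ≠ 0) :
    HasDerivAt (fun x : ℝ => x / (1 + x)) (1 / (1 + x) ^ 2) x := by
  refine ((hasDerivAt_id x).div ((hasDerivAt_id x).const_add 1) hx).congr_deriv ?_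
  simp only [id]
  field_simp
  ring

theorem hasDerivAt_mul_one_add_comp_div_one_add (c : ℝ) (hx : 1 + x ≠ 0)
    (hF : HasDerivAt F (φ (x / (1 + x))) (x / (1 + x))) :
    HasDerivAt (fun x => c * (1 + x) * F (x / (1 + x)))
      (c * (F (x / (1 + x)) + φ (x / (1 + x)) / (1 + x))) x := by
  refine ((((hasDerivAt_id x).const_add 1).const_mul c).mul
    (hF.comp x (hasDerivAt_div_one_add hx))).congr_deriv ?_
  simp only [Function.comp_apply, id]
  field_simp

/-- `hφ` is the equation `y² (1 - y) φ' + k φ = y / (1 - y)` at `y = x / (1 + x)`. -/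
theorem hasDerivAt_comp_div_one_add_of_ode (c k : ℝ) (hx₀ : x ≠ 0) (hx : 1 + x ≠ 0)
    (hF : HasDerivAt F (φ (x / (1 + x))) (x / (1 + x)))
    (hφ : HasDerivAt φ ((x / (1 + x) / (1 - x / (1 + x)) - k * φ (x / (1 + x))) /
      ((x / (1 + x)) ^ 2 * (1 - x / (1 + x)))) (x / (1 + x))) :
    HasDerivAt (fun x => c * (F (x / (1 + x)) + φ (x / (1 + x)) / (1 + x)))
      (c * ((x - k * φ (x / (1 + x))) / x ^ 2)) x := by
  have hy := hasDerivAt_div_one_add hx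
  refine (((hF.comp x hy).add ((hφ.comp x hy).div ((hasDerivAt_id x).const_add 1) hx)).const_mul
    c).congr_deriv ?_
  have h1y : 1 - x / (1 + x) = 1 / (1 + x) := by field_simp; ring
  simp only [Function.comp_apply, id, h1y]
  field_simp
  ring

theorem div_one_add_mem_Ioo {x : ℝ} (hx : 0 < x) : x / (1 + x) ∈ Ioo (0 : ℝ) 1 :=
  ⟨by positivity, (div_lt_one (by positivity)).2 (by linarith)⟩

end ChangeOfVariables

namespace Mtilde

def innerIntegrand (k u : ℝ) : ℝ := u ^ (k - 1) * (1 - u) ^ (-k - 2) * Real.exp (-k / u)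

def innerIntegral (k v : ℝ) : ℝ := ∫ u in Ioc 0 v, innerIntegrand k u

def weight (k v : ℝ) : ℝ := ((1 - v) / v) ^ k * Real.exp (k / v)

def outerIntegrand (k v : ℝ) : ℝ := weight k v * innerIntegral k v

def outerIntegral (k t : ℝ) : ℝ := ∫ v in Ioc 0 t, outerIntegrand k v

variable {k : ℝ}

theorem continuousOn_innerIntegrand : ContinuousOn (innerIntegrand k) (Ioo 0 1) := by
  intro u hu
  have hu1 : 1 - u ≠ 0 := by linarith [hu.2]
  refine ContinuousAt.continuousWithinAt ?_
  unfold innerIntegrand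
  fun_prop (disch := first | exact hu.1.ne' | exact Or.inl hu.1.ne' | exact Or.inl hu1)

theorem innerIntegrand_nonneg {u : ℝ} (hu : u ∈ Ioo (0 : ℝ) 1) : 0 ≤ innerIntegrand k u :=
  mul_nonneg (mul_nonneg (Real.rpow_nonneg hu.1.le _) (Real.rpow_nonneg (by linarith [hu.2]) _))
    (Real.exp_pos _).le

/-- Away from the power `u ^ (k - 1)`, the inner integrand is increasing on `(0, 1)`. -/
theorem innerIntegrand_le (hk : 0 < k) {u v : ℝ} (hu : 0 < u) (huv : u ≤ v) (hv : v < 1) :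
    innerIntegrand k u ≤ u ^ (k - 1) * ((1 - v) ^ (-k - 2) * Real.exp (-k / v)) := by
  have hpow : (1 - u) ^ (-k - 2) ≤ (1 - v) ^ (-k - 2) :=
    Real.rpow_le_rpow_of_nonpos (by linarith) (by linarith) (by linarith)
  have hexp : Real.exp (-k / u) ≤ Real.exp (-k / v) := by
    rw [Real.exp_le_exp, neg_div, neg_div, neg_le_neg_iff]
    exact div_le_div_of_nonneg_left hk.le hu huv
  rw [innerIntegrand, mul_assoc]
  gcongr

theorem integrableOn_innerIntegrand (hk : 0 < k) {t : ℝ} (ht : t ∈ Ioo (0 : ℝ) 1) :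
    IntegrableOn (innerIntegrand k) (Ioc 0 t) := by
  refine (integrableOn_rpow_mul_const (r := k - 1) (by linarith)
    ((1 - t) ^ (-k - 2) * Real.exp (-k / t)) ht.1.le).mono'
    (continuousOn_innerIntegrand.mono (Ioc_subset_Ioo_right ht.2) |>.aestronglyMeasurable
      measurableSet_Ioc) ?_
  refine (ae_restrict_iff' measurableSet_Ioc).2 (ae_of_all _ fun u hu => ?_)
  rw [Real.norm_of_nonneg (innerIntegrand_nonneg (Ioc_subset_Ioo_right ht.2 hu))]
  exact innerIntegrand_le hk hu.1 hu.2 ht.2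

theorem innerIntegral_nonneg {v : ℝ} (hv : v ∈ Ioo (0 : ℝ) 1) : 0 ≤ innerIntegral k v :=
  setIntegral_nonneg measurableSet_Ioc fun _ hu =>
    innerIntegrand_nonneg (Ioc_subset_Ioo_right hv.2 hu)

theorem innerIntegral_le (hk : 0 < k) {v : ℝ} (hv : v ∈ Ioo (0 : ℝ) 1) :
    innerIntegral k v ≤ v * innerIntegrand k v / k := by
  calc innerIntegral k v
      ≤ ∫ u in Ioc 0 v, u ^ (k - 1) * ((1 - v) ^ (-k - 2) * Real.exp (-k / v)) :=
        setIntegral_mono_on (integrableOn_innerIntegrand hk hv)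
          (integrableOn_rpow_mul_const (by linarith) _ hv.1.le) measurableSet_Ioc
          fun u hu => innerIntegrand_le hk hu.1 hu.2 hv.2
    _ = v ^ k / k * ((1 - v) ^ (-k - 2) * Real.exp (-k / v)) := by
        rw [← intervalIntegral.integral_of_le hv.1.le, intervalIntegral.integral_mul_const,
          integral_rpow (Or.inl (by linarith)), sub_add_cancel, Real.zero_rpow hk.ne', sub_zero]
    _ = v * innerIntegrand k v / k := by
        have hv0 := hv.1.ne'
        rw [innerIntegrand, Real.rpow_sub_one hv0]
        field_simp

theorem hasDerivAt_innerIntegral (hk : 0 < k) {v : ℝ} (hv : v ∈ Ioo (0 : ℝ) 1) :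
    HasDerivAt (innerIntegral k) (innerIntegrand k v) v :=
  hasDerivAt_setIntegral_Ioc hv.1 (integrableOn_innerIntegrand hk hv) isOpen_Ioo
    continuousOn_innerIntegrand hv

theorem weight_mul_innerIntegrand {v : ℝ} (hv : v ∈ Ioo (0 : ℝ) 1) :
    weight k v * innerIntegrand k v = 1 / (v * (1 - v) ^ 2) := by
  have hv0 : v ≠ 0 := hv.1.ne'
  have h1v : 0 < 1 - v := by linarith [hv.2]
  have : 0 < (1 - v) ^ k := Real.rpow_pos_of_pos h1v k
  have : 0 < v ^ k := Real.rpow_pos_of_pos hv.1 k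
  have : 0 < Real.exp (k / v) := Real.exp_pos _
  unfold weight innerIntegrand
  rw [Real.div_rpow h1v.le hv.1.le, Real.rpow_sub_one hv0, Real.rpow_sub h1v, Real.rpow_neg h1v.le,
    Real.rpow_two, neg_div, Real.exp_neg]
  field_simp

theorem continuousOn_weight : ContinuousOn (weight k) (Ioo 0 1) := by
  intro v hv
  have : (1 - v) / v ≠ 0 := div_ne_zero (by linarith [hv.2]) hv.1.ne'
  refine ContinuousAt.continuousWithinAt ?_
  unfold weight
  fun_prop (disch := first | exact hv.1.ne' | exact Or.inl this)

theorem weight_nonneg {v : ℝ} (hv : v ∈ Ioo (0 : ℝ) 1) : 0 ≤ weight k v :=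
  mul_nonneg (Real.rpow_nonneg (div_nonneg (by linarith [hv.2]) hv.1.le) _) (Real.exp_pos _).le

theorem hasDerivAt_weight {v : ℝ} (hv : v ∈ Ioo (0 : ℝ) 1) :
    HasDerivAt (weight k) (-k * weight k v / (v ^ 2 * (1 - v))) v := by
  have hv0 : v ≠ 0 := hv.1.ne'
  have h1v : 1 - v ≠ 0 := by linarith [hv.2]
  have hq : (1 - v) / v ≠ 0 := div_ne_zero h1v hv0
  have hbase : HasDerivAt (fun v : ℝ => (1 - v) / v) (-1 / v ^ 2) v := by
    refine (((hasDerivAt_id v).const_sub 1).div (hasDerivAt_id v) hv0).congr_deriv ?_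
    simp only [id]
    field_simp
    ring
  have hexp : HasDerivAt (fun v : ℝ => Real.exp (k / v)) (Real.exp (k / v) * (-k / v ^ 2)) v := by
    refine ((hasDerivAt_inv hv0).const_mul k).exp.congr_deriv ?_
    field_simp
  refine ((hbase.rpow_const (p := k) (Or.inl hq)).mul hexp).congr_deriv ?_
  unfold weight
  rw [Real.rpow_sub_one hq]
  field_simp
  ring

theorem outerIntegrand_nonneg {v : ℝ} (hv : v ∈ Ioo (0 : ℝ) 1) : 0 ≤ outerIntegrand k v :=
  mul_nonneg (weight_nonneg hv) (innerIntegral_nonneg hv)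

theorem outerIntegrand_le (hk : 0 < k) {v : ℝ} (hv : v ∈ Ioo (0 : ℝ) 1) :
    outerIntegrand k v ≤ 1 / (k * (1 - v) ^ 2) := by
  have h1v : 1 - v ≠ 0 := by linarith [hv.2]
  calc outerIntegrand k v ≤ weight k v * (v * innerIntegrand k v / k) :=
        mul_le_mul_of_nonneg_left (innerIntegral_le hk hv) (weight_nonneg hv)
    _ = v * (weight k v * innerIntegrand k v) / k := by ring
    _ = 1 / (k * (1 - v) ^ 2) := by
        rw [weight_mul_innerIntegrand hv]
        field_simp [hv.1.ne']

theorem continuousOn_outerIntegrand (hk : 0 < k) : ContinuousOn (outerIntegrand k) (Ioo 0 1) :=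
  continuousOn_weight.mul fun _ hv =>
    (hasDerivAt_innerIntegral hk hv).continuousAt.continuousWithinAt

theorem integrableOn_outerIntegrand (hk : 0 < k) {t : ℝ} (ht : t ∈ Ioo (0 : ℝ) 1) :
    IntegrableOn (outerIntegrand k) (Ioc 0 t) := by
  refine (integrableOn_const (C := 1 / (k * (1 - t) ^ 2)) measure_Ioc_lt_top.ne).mono'
    ((continuousOn_outerIntegrand hk).mono (Ioc_subset_Ioo_right ht.2) |>.aestronglyMeasurable
      measurableSet_Ioc) ?_
  refine (ae_restrict_iff' measurableSet_Ioc).2 (ae_of_all _ fun v hv => ?_)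
  have hv' := Ioc_subset_Ioo_right ht.2 hv
  rw [Real.norm_of_nonneg (outerIntegrand_nonneg hv')]
  refine (outerIntegrand_le hk hv').trans ?_
  have : 0 < 1 - t := by linarith [ht.2]
  gcongr
  linarith [hv.2]

theorem hasDerivAt_outerIntegral (hk : 0 < k) {t : ℝ} (ht : t ∈ Ioo (0 : ℝ) 1) :
    HasDerivAt (outerIntegral k) (outerIntegrand k t) t :=
  hasDerivAt_setIntegral_Ioc ht.1 (integrableOn_outerIntegrand hk ht) isOpen_Ioo
    (continuousOn_outerIntegrand hk) ht

theorem hasDerivAt_outerIntegrand (hk : 0 < k) {v : ℝ} (hv : v ∈ Ioo (0 : ℝ) 1) :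
    HasDerivAt (outerIntegrand k)
      ((v / (1 - v) - k * outerIntegrand k v) / (v ^ 2 * (1 - v))) v := by
  have hv0 : v ≠ 0 := hv.1.ne'
  have h1v : 1 - v ≠ 0 := by linarith [hv.2]
  refine ((hasDerivAt_weight hv).mul (hasDerivAt_innerIntegral hk hv)).congr_deriv ?_
  rw [weight_mul_innerIntegrand hv, outerIntegrand]
  field_simp
  ring

end Mtilde

theorem Mtilde_eq_outerIntegral (ν lam : ℝ) :
    Mtilde ν lam = fun x => 2 / ν * (1 + x) * Mtilde.outerIntegral (2 * lam / ν) (x / (1 + x)) :=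
  rfl

open Mtilde in
theorem Mtilde_solves_ode (ν lam : ℝ) (hν : 0 < ν) (hlam : 0 < lam) :
    ∀ x ∈ Set.Ioi (0 : ℝ),
      DifferentiableAt ℝ (Mtilde ν lam) x ∧
      DifferentiableAt ℝ (deriv (Mtilde ν lam)) x ∧
      lam * (1 + x) * deriv (Mtilde ν lam) x +
        (ν / 2) * x ^ 2 * deriv (deriv (Mtilde ν lam)) x -
          lam * Mtilde ν lam x = x := by
  intro x (hx : 0 < x)
  have hk : 0 < 2 * lam / ν := by positivity
  have hF (x : ℝ) (hx : 0 < x) := hasDerivAt_outerIntegral hk (div_one_add_mem_Ioo hx)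
  have hM' (x : ℝ) (hx : 0 < x) : HasDerivAt (Mtilde ν lam)
      (2 / ν * (outerIntegral (2 * lam / ν) (x / (1 + x)) +
        outerIntegrand (2 * lam / ν) (x / (1 + x)) / (1 + x))) x := by
    rw [Mtilde_eq_outerIntegral]
    exact hasDerivAt_mul_one_add_comp_div_one_add _ (by positivity) (hF x hx)
  have hM'' : HasDerivAt (deriv (Mtilde ν lam))
      (2 / ν * ((x - 2 * lam / ν * outerIntegrand (2 * lam / ν) (x / (1 + x))) / x ^ 2)) x := by
    refine (hasDerivAt_comp_div_one_add_of_ode _ _ hx.ne' (by positivity) (hF x hx)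
      (hasDerivAt_outerIntegrand hk (div_one_add_mem_Ioo hx))).congr_of_eventuallyEq ?_
    filter_upwards [Ioi_mem_nhds hx] with t ht using (hM' t ht).deriv
  refine ⟨(hM' x hx).differentiableAt, hM''.differentiableAt, ?_⟩
  rw [(hM' x hx).deriv, hM''.deriv, Mtilde_eq_outerIntegral]
  field_simp
  ring
end
end

section
/- There exists a unique φ_* ∈ (λ/c, ∞) satisfying the equation e^{κ(1+φ_*)/φ_*} φ_*^{−κ} ∫_0^{φ_*/(1+φ_*)} u^{κ−1} (1−u)^{−κ−2} e^{−κ/u} du = μ²/(2c). -/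
/-!
Write `F := boundaryFun k`. The substitution `u = x / (1 + x)` turns the derivative of
`x ↦ ∫_0^{x/(1+x)} …` into `x^(k-1) (1 + x) e^(-k(1+x)/x)`, so `F` solves the linear ODE
`x F' = (1 + x) (1 - k F / x)`. The function `x^(k+1)/k · e^(-k(1+x)/x)` also vanishes at `0⁺`
and grows faster than the integral, which gives `F x < x / k`. Hence `F' > 0`, and at
`a = λ/c` we get `F a < a / k = μ²/(2c)`. While `F` stays below a bound `T`, eventually `F' ≥ 1/2`,
so `F` is unbounded; the intermediate value theorem on `[a, ∞)` and strict monotonicity finish.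
-/

open MeasureTheory Set

noncomputable section

open Filter Real
open scoped Topology

def boundaryIntegrand (k u : ℝ) : ℝ := u ^ (k - 1) * (1 - u) ^ (-k - 2) * exp (-k / u)

def boundaryIntegral (k x : ℝ) : ℝ := ∫ u in Ioc 0 (x / (1 + x)), boundaryIntegrand k u

def boundaryFun (k x : ℝ) : ℝ := exp (k * (1 + x) / x) * x ^ (-k) * boundaryIntegral k x

section

variable {k : ℝ}

theorem continuousAt_boundaryIntegrand {u : ℝ} (hu₀ : 0 < u) (hu₁ : u < 1) :
    ContinuousAt (boundaryIntegrand k) u :=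
  (((continuousAt_id.rpow_const (.inl hu₀.ne')).mul
    ((continuousAt_const.sub continuousAt_id).rpow_const (.inl (sub_pos.2 hu₁).ne'))).mul
    (continuousAt_const.div continuousAt_id hu₀.ne').rexp)

theorem boundaryIntegrand_pos {u : ℝ} (hu₀ : 0 < u) (hu₁ : u < 1) :
    0 < boundaryIntegrand k u := by
  have : 0 < 1 - u := by linarith
  unfold boundaryIntegrand
  positivity

theorem boundaryIntegrand_le (hk : 0 ≤ k) {s u : ℝ} (hs : s < 1) (hu : u ∈ Ioc 0 s) :
    boundaryIntegrand k u ≤ (1 - s) ^ (-k - 2) * u ^ (k - 1) := by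
  obtain ⟨hu₀, hus⟩ := hu
  have h₁ : (1 - u) ^ (-k - 2) ≤ (1 - s) ^ (-k - 2) :=
    rpow_le_rpow_of_nonpos (by linarith) (by linarith) (by linarith)
  have h₂ : exp (-k / u) ≤ 1 :=
    exp_le_one_iff.2 (div_nonpos_of_nonpos_of_nonneg (by linarith) hu₀.le)
  calc boundaryIntegrand k u ≤ u ^ (k - 1) * (1 - s) ^ (-k - 2) * 1 := by
        unfold boundaryIntegrand
        gcongr
    _ = _ := by ring

theorem integrableOn_boundaryIntegrand (hk : 0 < k) {s : ℝ} (hs : s < 1) :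
    IntegrableOn (boundaryIntegrand k) (Ioc 0 s) := by
  have hpow : IntegrableOn (fun u : ℝ => u ^ (k - 1)) (Ioc 0 s) :=
    ((intervalIntegral.intervalIntegrable_rpow' (by linarith)).def').mono_set Ioc_subset_uIoc
  refine (hpow.const_mul ((1 - s) ^ (-k - 2))).mono' ?_ ?_
  · exact ContinuousOn.aestronglyMeasurable
      (fun u hu => (continuousAt_boundaryIntegrand hu.1 (by linarith [hu.2])).continuousWithinAt)
      measurableSet_Ioc
  · refine (ae_restrict_iff' measurableSet_Ioc).2 (ae_of_all _ fun u hu => ?_)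
    rw [Real.norm_of_nonneg (boundaryIntegrand_pos hu.1 (by linarith [hu.2])).le]
    exact boundaryIntegrand_le hk.le hs hu

theorem boundaryIntegrand_div_one_add {x : ℝ} (hx : 0 < x) :
    boundaryIntegrand k (x / (1 + x)) = x ^ (k - 1) * (1 + x) ^ 3 * exp (-(k * (1 + x) / x)) := by
  have hx₁ : 0 < 1 + x := by linarith
  have h₁ : 1 - x / (1 + x) = (1 + x)⁻¹ := by field_simp; ring
  have h₂ : ((1 + x)⁻¹) ^ (-k - 2) = (1 + x) ^ (k - 1) * (1 + x) ^ 3 := by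
    rw [inv_rpow hx₁.le, ← rpow_neg hx₁.le, ← rpow_natCast, ← rpow_add hx₁]
    ring_nf
  rw [boundaryIntegrand, div_rpow hx.le hx₁.le, h₁, h₂, neg_div, div_div_eq_mul_div,
    ← neg_div]
  field_simp

theorem hasDerivAt_boundaryIntegral (hk : 0 < k) {x : ℝ} (hx : 0 < x) :
    HasDerivAt (boundaryIntegral k) (x ^ (k - 1) * (1 + x) * exp (-(k * (1 + x) / x))) x := by
  have hx₁ : 0 < 1 + x := by linarith
  set r := x / (1 + x)
  have hr₀ : 0 < r := by positivity
  have hr₁ : r < 1 := (div_lt_one hx₁).2 (by linarith)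
  have hprim : HasDerivAt (fun t => ∫ u in (0 : ℝ)..t, boundaryIntegrand k u)
      (boundaryIntegrand k r) r := by
    refine intervalIntegral.integral_hasDerivAt_right ?_ ?_
      (continuousAt_boundaryIntegrand hr₀ hr₁)
    · exact (intervalIntegrable_iff_integrableOn_Ioc_of_le hr₀.le).2
        (integrableOn_boundaryIntegrand hk hr₁)
    · exact ContinuousAt.stronglyMeasurableAtFilter isOpen_Ioo
        (fun u hu => continuousAt_boundaryIntegrand hu.1 hu.2) r ⟨hr₀, hr₁⟩
  have hfrac : HasDerivAt (fun x : ℝ => x / (1 + x)) (1 / (1 + x) ^ 2) x :=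
    ((hasDerivAt_id x).div ((hasDerivAt_id x).const_add 1) hx₁.ne').congr_deriv (by simp)
  have hcomp := hprim.comp x hfrac
  refine (hcomp.congr_deriv ?_).congr_of_eventuallyEq ?_
  · rw [boundaryIntegrand_div_one_add hx]
    field_simp
  · filter_upwards [Ioi_mem_nhds hx] with y hy
    have : 0 ≤ y / (1 + y) := div_nonneg (le_of_lt hy) (by linarith [mem_Ioi.1 hy])
    simp only [Function.comp, boundaryIntegral, intervalIntegral.integral_of_le this]

theorem tendsto_boundaryIntegral_zero (hk : 0 < k) :
    Tendsto (boundaryIntegral k) (𝓝[>] 0) (𝓝 0) := by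
  have hprim : ContinuousWithinAt (fun r => ∫ u in (0 : ℝ)..r, boundaryIntegrand k u)
      (Icc 0 (1 / 2)) 0 := by
    have := intervalIntegral.continuousOn_primitive_interval (μ := volume) (a := 0) (b := 1 / 2)
      (f := boundaryIntegrand k)
    rw [uIcc_of_le (by norm_num), integrableOn_Icc_iff_integrableOn_Ioc] at this
    exact this (integrableOn_boundaryIntegrand hk (by norm_num)) 0 (by norm_num)
  have hfrac : Tendsto (fun x : ℝ => x / (1 + x)) (𝓝[>] 0) (𝓝[Icc 0 (1 / 2)] 0) := by
    refine tendsto_nhdsWithin_of_tendsto_nhds_of_eventually_within _ ?_ ?_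
    · have : ContinuousAt (fun x : ℝ => x / (1 + x)) 0 :=
        continuousAt_id.div (continuousAt_const.add continuousAt_id) (by norm_num)
      simpa using this.tendsto.mono_left nhdsWithin_le_nhds
    · filter_upwards [Ioo_mem_nhdsGT (show (0 : ℝ) < 1 by norm_num)] with x hx
      have hx₁ : 0 < 1 + x := by linarith [hx.1]
      exact ⟨div_nonneg hx.1.le hx₁.le, by rw [div_le_iff₀ hx₁]; linarith [hx.2]⟩
  have := hprim.tendsto.comp hfrac
  simp only [intervalIntegral.integral_same] at this
  refine this.congr' ?_
  filter_upwards [self_mem_nhdsWithin] with x hx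
  have hx : 0 < x := hx
  simp [boundaryIntegral, intervalIntegral.integral_of_le (by positivity : 0 ≤ x / (1 + x))]

theorem hasDerivAt_boundaryFun (hk : 0 < k) {x : ℝ} (hx : 0 < x) :
    HasDerivAt (boundaryFun k) ((1 + x) / x * (1 - k * boundaryFun k x / x)) x := by
  have hexp : HasDerivAt (fun x => exp (k * (1 + x) / x))
      (exp (k * (1 + x) / x) * (-k / x ^ 2)) x :=
    HasDerivAt.exp <| (((hasDerivAt_id x).const_add 1).const_mul k).div (hasDerivAt_id x) hx.ne'
      |>.congr_deriv (by simp only [id]; field_simp; ring)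
  have hpow : HasDerivAt (fun x : ℝ => x ^ (-k)) (-k * x ^ (-k - 1)) x :=
    hasDerivAt_rpow_const (.inl hx.ne')
  refine ((hexp.mul hpow).mul (hasDerivAt_boundaryIntegral hk hx)).congr_deriv ?_
  have hcancel : exp (k * (1 + x) / x) * exp (-(k * (1 + x) / x)) * (x ^ (-k) * x ^ (k - 1) * x)
      = 1 := by
    rw [← exp_add, add_neg_cancel, exp_zero, ← rpow_add hx, ← rpow_add_one hx.ne']
    ring_nf
    exact rpow_zero x
  have hpow_sub : x ^ (-k - 1) = x ^ (-k) * x⁻¹ := by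
    rw [← rpow_neg_one, ← rpow_add hx]; ring_nf
  simp only [boundaryFun, hpow_sub, Pi.mul_apply]
  field_simp
  linear_combination (1 + x) * x * hcancel

/-- `boundaryFun k x < x / k` is `0 < boundaryGap k x`. -/
def boundaryGap (k x : ℝ) : ℝ :=
  x ^ (k + 1) / k * exp (-(k * (1 + x) / x)) - boundaryIntegral k x

theorem hasDerivAt_boundaryGap (hk : 0 < k) {x : ℝ} (hx : 0 < x) :
    HasDerivAt (boundaryGap k) (exp (-(k * (1 + x) / x)) * x ^ k / k) x := by
  have hexp : HasDerivAt (fun x => exp (-(k * (1 + x) / x)))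
      (exp (-(k * (1 + x) / x)) * (k / x ^ 2)) x :=
    HasDerivAt.exp <| (((hasDerivAt_id x).const_add 1).const_mul k).div (hasDerivAt_id x) hx.ne'
      |>.neg.congr_deriv (by simp only [id]; field_simp; ring)
  have hpow : HasDerivAt (fun x : ℝ => x ^ (k + 1)) ((k + 1) * x ^ k) x := by
    simpa using hasDerivAt_rpow_const (p := k + 1) (.inl hx.ne')
  refine (((hpow.div_const k).mul hexp).sub (hasDerivAt_boundaryIntegral hk hx)).congr_deriv ?_
  have hsucc : x ^ (k + 1) = x ^ k * x := rpow_add_one hx.ne' k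
  have hpred : x ^ (k - 1) = x ^ k / x := by rw [rpow_sub_one hx.ne']
  rw [hsucc, hpred]
  field_simp
  ring

theorem tendsto_boundaryGap_zero (hk : 0 < k) : Tendsto (boundaryGap k) (𝓝[>] 0) (𝓝 0) := by
  unfold boundaryGap
  have hpow : Tendsto (fun x : ℝ => x ^ (k + 1) / k) (𝓝[>] 0) (𝓝 0) := by
    have : ContinuousAt (fun x : ℝ => x ^ (k + 1) / k) 0 :=
      (continuousAt_id.rpow_const (.inr (by linarith))).div_const k
    simpa [zero_rpow (by linarith : k + 1 ≠ 0)] using this.tendsto.mono_left nhdsWithin_le_nhds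
  have hexp : ∀ᶠ x in 𝓝[>] (0 : ℝ), ‖exp (-(k * (1 + x) / x))‖ ≤ 1 := by
    filter_upwards [self_mem_nhdsWithin] with x hx
    have hx : 0 < x := hx
    rw [norm_of_nonneg (exp_pos _).le, exp_le_one_iff, neg_nonpos]
    positivity
  simpa using (hpow.zero_mul_isBoundedUnder_le ⟨1, hexp⟩).sub (tendsto_boundaryIntegral_zero hk)

theorem boundaryGap_pos (hk : 0 < k) {x : ℝ} (hx : 0 < x) : 0 < boundaryGap k x := by
  have hmono : StrictMonoOn (boundaryGap k) (Ioi 0) := by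
    refine strictMonoOn_of_hasDerivWithinAt_pos
      (f' := fun y => exp (-(k * (1 + y) / y)) * y ^ k / k) (convex_Ioi 0)
      (fun y hy => (hasDerivAt_boundaryGap hk hy).continuousAt.continuousWithinAt)
      (fun y hy => ?_) (fun y hy => ?_)
    · rw [interior_Ioi] at hy ⊢
      exact (hasDerivAt_boundaryGap hk hy).hasDerivWithinAt
    · rw [interior_Ioi] at hy
      have hy : 0 < y := hy
      positivity
  have hhalf : 0 < x / 2 := by positivity
  have hle : 0 ≤ boundaryGap k (x / 2) := by
    refine le_of_tendsto (tendsto_boundaryGap_zero hk) ?_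
    filter_upwards [Ioo_mem_nhdsGT hhalf] with y hy
    exact (hmono hy.1 hhalf hy.2).le
  exact hle.trans_lt (hmono hhalf (show 0 < x from hx) (by linarith))

theorem boundaryFun_lt (hk : 0 < k) {x : ℝ} (hx : 0 < x) : boundaryFun k x < x / k := by
  have hgap := boundaryGap_pos hk hx
  rw [boundaryGap, sub_pos] at hgap
  have hfactor : 0 < exp (k * (1 + x) / x) * x ^ (-k) := by positivity
  calc boundaryFun k x
      < exp (k * (1 + x) / x) * x ^ (-k) * (x ^ (k + 1) / k * exp (-(k * (1 + x) / x))) :=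
        mul_lt_mul_of_pos_left hgap hfactor
    _ = exp (k * (1 + x) / x) * exp (-(k * (1 + x) / x)) * (x ^ (-k) * x ^ (k + 1)) / k := by ring
    _ = x / k := by
        rw [← exp_add, ← rpow_add hx, add_neg_cancel, exp_zero, neg_add_cancel_left, rpow_one,
          one_mul]

theorem continuousOn_boundaryFun (hk : 0 < k) : ContinuousOn (boundaryFun k) (Ioi 0) :=
  fun _ hx => (hasDerivAt_boundaryFun hk hx).continuousAt.continuousWithinAt

theorem strictMonoOn_boundaryFun (hk : 0 < k) : StrictMonoOn (boundaryFun k) (Ioi 0) := by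
  refine strictMonoOn_of_hasDerivWithinAt_pos (convex_Ioi 0) (continuousOn_boundaryFun hk)
    (f' := fun x => (1 + x) / x * (1 - k * boundaryFun k x / x))
    (fun x hx => ?_) (fun x hx => ?_)
  · rw [interior_Ioi] at hx ⊢
    exact (hasDerivAt_boundaryFun hk hx).hasDerivWithinAt
  · rw [interior_Ioi] at hx
    have hx : 0 < x := hx
    have hlt : k * boundaryFun k x / x < 1 := by
      rw [div_lt_one hx, ← lt_div_iff₀' hk]
      exact boundaryFun_lt hk hx
    have : 0 < 1 - k * boundaryFun k x / x := by linarith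
    positivity

theorem exists_lt_boundaryFun (hk : 0 < k) (T : ℝ) : ∃ x, 0 < x ∧ T < boundaryFun k x := by
  by_contra! hbdd
  set b := max 1 (2 * k * T)
  have hb : 0 < b := lt_max_of_lt_left one_pos
  -- beyond `2 k T` the bound `F ≤ T` forces `F' ≥ 1 / 2`
  have hmono : MonotoneOn (fun x => boundaryFun k x - x / 2) (Ici b) := by
    refine monotoneOn_of_hasDerivWithinAt_nonneg (convex_Ici b)
      (f' := fun x => (1 + x) / x * (1 - k * boundaryFun k x / x) - 1 / 2)
      (fun x hx => (((hasDerivAt_boundaryFun hk (hb.trans_le hx)).sub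
        ((hasDerivAt_id x).div_const 2)).continuousAt.continuousWithinAt))
      (fun x hx => ?_) (fun x hx => ?_)
    · rw [interior_Ici] at hx ⊢
      exact ((hasDerivAt_boundaryFun hk (hb.trans hx)).sub
        ((hasDerivAt_id x).div_const 2)).hasDerivWithinAt
    · rw [interior_Ici] at hx
      have hx : b < x := hx
      have hx₀ : 0 < x := hb.trans hx
      have hkT : k * boundaryFun k x / x ≤ 1 / 2 := by
        rw [div_le_iff₀ hx₀]
        nlinarith [hbdd x hx₀, le_max_right 1 (2 * k * T)]
      have hfrac : 1 ≤ (1 + x) / x := by rw [le_div_iff₀ hx₀]; linarith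
      nlinarith
  set x := b + 2 * (T - boundaryFun k b) + 2
  have hbx : b ≤ x := by linarith [hbdd b hb]
  have := hmono self_mem_Ici hbx hbx
  linarith [hbdd x (hb.trans_le hbx)]

theorem existsUnique_boundaryFun_eq (hk : 0 < k) {a T : ℝ} (ha : 0 < a)
    (hT : boundaryFun k a < T) :
    ∃! x, x ∈ Ioi a ∧ boundaryFun k x = T := by
  obtain ⟨b, hb, hTb⟩ := exists_lt_boundaryFun hk T
  have hab : a < b := by
    by_contra! hba
    linarith [(strictMonoOn_boundaryFun hk).monotoneOn hb ha hba]
  obtain ⟨x, hx, hFx⟩ := intermediate_value_Icc hab.le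
    ((continuousOn_boundaryFun hk).mono fun y hy => ha.trans_le hy.1) ⟨hT.le, hTb.le⟩
  have hax : a < x := hx.1.lt_of_ne (by rintro rfl; exact hT.ne hFx)
  refine ⟨x, ⟨hax, hFx⟩, fun y ⟨hay, hFy⟩ => ?_⟩
  exact (strictMonoOn_boundaryFun hk).injOn (ha.trans hay) (ha.trans hax) (hFy.trans hFx.symm)

end

theorem one_dimensional_boundary_exists_unique
    (μ lam c : ℝ) (hμ : μ ≠ 0) (hlam : 0 < lam) (hc : 0 < c) :
    ∃! x : ℝ, x ∈ Set.Ioi (lam / c) ∧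
      Real.exp ((2 * lam / μ ^ 2) * (1 + x) / x) * x ^ (-(2 * lam / μ ^ 2)) *
          ∫ u in Set.Ioc (0 : ℝ) (x / (1 + x)),
            u ^ (2 * lam / μ ^ 2 - 1) * (1 - u) ^ (-(2 * lam / μ ^ 2) - 2) *
              Real.exp (-(2 * lam / μ ^ 2) / u) =
        μ ^ 2 / (2 * c) := by
  have hk : 0 < 2 * lam / μ ^ 2 := by positivity
  have ha : 0 < lam / c := by positivity
  have hT : lam / c / (2 * lam / μ ^ 2) = μ ^ 2 / (2 * c) := by field_simp
  rw [← hT]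
  exact existsUnique_boundaryFun_eq hk ha (boundaryFun_lt hk ha)

end
end
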